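/- arXiv:2211.04366 — 2 statements merged into one kernel-verified Lean document; each statement's English description precedes it below -/
import Mathlib

section
/- Let W be a dual Banach space and X ⊆ Y subspaces of W such that both X and Y admit Lebesgue decompositions relative to W. If φ ∈ SG_W(X) is a singular functional on X and ψ ∈ Y* is a Hahn–Banach (norm-preserving) extension of φ to Y, then ψ ∈ SG_W(Y). -/
open NormedSpace Filter Topology

def WeakStarContinuous {V : Type*} [NormedAddCommGroup V] [NormedSpace ℂ V]
    (Φ : StrongDual ℂ V → ℂ) : Prop :=
  Continuous fun w : WeakDual ℂ V => Φ (WeakDual.toStrongDual w)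

def ACset {V : Type*} [NormedAddCommGroup V] [NormedSpace ℂ V]
    (X : @Subspace ℂ (StrongDual ℂ V) _ _ NormedSpace.toModule) : Set (StrongDual ℂ ↥X) :=
  {φ | ∃ Φ : StrongDual ℂ V →ₗ[ℂ] ℂ, WeakStarContinuous Φ ∧ ∀ x : ↥X, Φ (x : StrongDual ℂ V) = φ x}

def IsLebesgueDecomposition {V : Type*} [NormedAddCommGroup V] [NormedSpace ℂ V]
    (X : @Subspace ℂ (StrongDual ℂ V) _ _ NormedSpace.toModule) (L : StrongDual ℂ ↥X →L[ℂ] StrongDual ℂ ↥X) : Prop :=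
  (∀ φ, L (L φ) = L φ) ∧ Set.range L = ACset X ∧
    ∀ φ : StrongDual ℂ ↥X, ‖φ‖ = ‖L φ‖ + ‖φ - L φ‖

/-- The continuous inclusion of `X` into `Y` for nested subspaces. -/
noncomputable def inclCLM {V : Type*} [NormedAddCommGroup V] [NormedSpace ℂ V]
    {X Y : @Subspace ℂ (StrongDual ℂ V) _ _ NormedSpace.toModule} (h : X ≤ Y) : ↥X →L[ℂ] ↥Y :=
  LinearMap.mkContinuous (Submodule.inclusion h) 1 (fun x => by
    rw [one_mul]; exact le_of_eq rfl)

/-!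
Restrict the absolutely continuous part `a := (LY ψ)|_X`; it stays absolutely continuous, so
`φ - a` has `LX`-decomposition `(-a, φ)` and norm `‖a‖ + ‖φ‖`. But `φ - a` is the restriction of
the singular part `ψ - LY ψ`, whose norm is `‖ψ‖ - ‖LY ψ‖ = ‖φ‖ - ‖LY ψ‖`. Restriction does not
increase norms, hence `‖a‖ + ‖LY ψ‖ ≤ 0`.
-/

section

variable {V : Type*} [NormedAddCommGroup V] [NormedSpace ℂ V]
  {X Y : @Subspace ℂ (StrongDual ℂ V) _ _ NormedSpace.toModule}

theorem norm_comp_inclCLM_le (h : X ≤ Y) (θ : StrongDual ℂ ↥Y) :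
    ‖θ.comp (inclCLM h)‖ ≤ ‖θ‖ :=
  calc ‖θ.comp (inclCLM h)‖ ≤ ‖θ‖ * ‖inclCLM h‖ := θ.opNorm_comp_le _
    _ ≤ ‖θ‖ * 1 := by gcongr; exact LinearMap.mkContinuous_norm_le _ zero_le_one _
    _ = ‖θ‖ := mul_one _

theorem comp_inclCLM_mem_ACset (h : X ≤ Y) {θ : StrongDual ℂ ↥Y} (hθ : θ ∈ ACset Y) :
    θ.comp (inclCLM h) ∈ ACset X := by
  obtain ⟨Φ, hΦ, hΦθ⟩ := hθ
  exact ⟨Φ, hΦ, fun x => hΦθ (inclCLM h x)⟩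

namespace IsLebesgueDecomposition

variable {L : StrongDual ℂ ↥X →L[ℂ] StrongDual ℂ ↥X}

theorem apply_mem_ACset (hL : IsLebesgueDecomposition X L) (φ : StrongDual ℂ ↥X) :
    L φ ∈ ACset X :=
  hL.2.1 ▸ Set.mem_range_self φ

theorem apply_eq_self_of_mem_ACset (hL : IsLebesgueDecomposition X L) {a : StrongDual ℂ ↥X}
    (ha : a ∈ ACset X) : L a = a := by
  obtain ⟨φ, rfl⟩ := hL.2.1 ▸ ha
  exact hL.1 φ

theorem norm_sub_eq_add_of_apply_eq_zero (hL : IsLebesgueDecomposition X L)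
    {φ a : StrongDual ℂ ↥X} (hφ : L φ = 0) (ha : a ∈ ACset X) :
    ‖φ - a‖ = ‖a‖ + ‖φ‖ := by
  have hLs : L (φ - a) = -a := by
    rw [map_sub, hφ, hL.apply_eq_self_of_mem_ACset ha, zero_sub]
  simpa only [hLs, ContinuousLinearMap.opNorm_neg, sub_neg_eq_add, sub_add_cancel] using hL.2.2 (φ - a)

end IsLebesgueDecomposition

end

/-- a Hahn–Banach (norm-preserving) extension of a singular functional on `X`
to `Y` is singular on `Y`. -/
theorem stmt2 {V : Type*} [NormedAddCommGroup V] [NormedSpace ℂ V]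
    {X Y : @Subspace ℂ (StrongDual ℂ V) _ _ NormedSpace.toModule} (hXY : X ≤ Y)
    (LX : StrongDual ℂ ↥X →L[ℂ] StrongDual ℂ ↥X) (LY : StrongDual ℂ ↥Y →L[ℂ] StrongDual ℂ ↥Y)
    (hLX : IsLebesgueDecomposition X LX) (hLY : IsLebesgueDecomposition Y LY)
    (φ : StrongDual ℂ ↥X) (hφ : LX φ = 0)
    (ψ : StrongDual ℂ ↥Y) (hext : ∀ x : ↥X, ψ (inclCLM hXY x) = φ x)
    (hnorm : ‖ψ‖ = ‖φ‖) :
    LY ψ = 0 := by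
  set a := (LY ψ).comp (inclCLM hXY)
  have ha : a ∈ ACset X := comp_inclCLM_mem_ACset hXY (hLY.apply_mem_ACset ψ)
  have hsplit : φ - a = (ψ - LY ψ).comp (inclCLM hXY) := by
    have hψφ : ψ.comp (inclCLM hXY) = φ := ContinuousLinearMap.ext hext
    rw [ContinuousLinearMap.sub_comp, hψφ]
  have hX : ‖φ - a‖ = ‖a‖ + ‖φ‖ := hLX.norm_sub_eq_add_of_apply_eq_zero hφ ha
  have hY : ‖φ - a‖ ≤ ‖ψ - LY ψ‖ := hsplit ▸ norm_comp_inclCLM_le hXY _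
  have hψ : ‖ψ‖ = ‖LY ψ‖ + ‖ψ - LY ψ‖ := hLY.2.2 ψ
  have hLYψ : ‖LY ψ‖ ≤ 0 := by linarith [norm_nonneg a]
  exact (ContinuousLinearMap.opNorm_zero_iff _).mp (le_antisymm hLYψ (norm_nonneg _))
end

section
/- Let W be a dual Banach space and X ⊆ Y subspaces of W. If X and Y admit compatible Lebesgue decompositions relative to W, then the inclusion X ⊆ Y has the Gleason–Whitney property relative to W: whenever φ ∈ AC_W(X) and ψ ∈ Y* is a norm-preserving extension of φ, then ψ ∈ AC_W(Y). -/
open NormedSpace Filter Topology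

section LebesgueDecomposition

variable {V : Type*} [NormedAddCommGroup V] [NormedSpace ℂ V]
  {X : @Subspace ℂ (StrongDual ℂ V) _ _ NormedSpace.toModule}
  {L : StrongDual ℂ ↥X →L[ℂ] StrongDual ℂ ↥X}

theorem IsLebesgueDecomposition.mem_ACset_iff (hL : IsLebesgueDecomposition X L)
    {φ : StrongDual ℂ ↥X} : φ ∈ ACset X ↔ L φ = φ := by
  rw [← hL.2.1]
  exact ⟨fun ⟨χ, hχ⟩ => hχ ▸ hL.1 χ, fun h => ⟨φ, h⟩⟩

theorem IsLebesgueDecomposition.apply_eq_self_of_norm_le (hL : IsLebesgueDecomposition X L)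
    {φ : StrongDual ℂ ↥X} (h : ‖φ‖ ≤ ‖L φ‖) : L φ = φ := by
  have hsingular : ‖φ - L φ‖ = 0 := by
    linarith [hL.2.2 φ, norm_nonneg (φ - L φ)]
  exact (sub_eq_zero.mp (norm_eq_zero.mp hsingular)).symm

end LebesgueDecomposition

theorem norm_comp_inclCLM_le_s8 {V : Type*} [NormedAddCommGroup V] [NormedSpace ℂ V]
    {X Y : @Subspace ℂ (StrongDual ℂ V) _ _ NormedSpace.toModule} (h : X ≤ Y)
    (ψ : StrongDual ℂ ↥Y) : ‖ψ.comp (inclCLM h)‖ ≤ ‖ψ‖ :=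
  calc ‖ψ.comp (inclCLM h)‖ ≤ ‖ψ‖ * ‖inclCLM h‖ := ψ.opNorm_comp_le _
    _ ≤ ‖ψ‖ * 1 := by
      gcongr
      exact LinearMap.mkContinuous_norm_le _ zero_le_one _
    _ = ‖ψ‖ := mul_one _

/-- if `X ⊆ Y` admit compatible Lebesgue decompositions relative to `W`,
then the inclusion has the Gleason–Whitney property: every norm-preserving extension to
`Y` of an absolutely continuous functional on `X` is absolutely continuous on `Y`. -/
theorem stmt8 {V : Type*} [NormedAddCommGroup V] [NormedSpace ℂ V]
    {X Y : @Subspace ℂ (StrongDual ℂ V) _ _ NormedSpace.toModule} (hXY : X ≤ Y)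
    (LX : StrongDual ℂ ↥X →L[ℂ] StrongDual ℂ ↥X) (LY : StrongDual ℂ ↥Y →L[ℂ] StrongDual ℂ ↥Y)
    (hLX : IsLebesgueDecomposition X LX) (hLY : IsLebesgueDecomposition Y LY)
    (hcompat : ∀ ψ : StrongDual ℂ ↥Y,
      LX (ψ.comp (inclCLM hXY)) = (LY ψ).comp (inclCLM hXY) ∧
      ψ.comp (inclCLM hXY) - LX (ψ.comp (inclCLM hXY))
        = (ψ - LY ψ).comp (inclCLM hXY)) :
    ∀ φ ∈ ACset X, ∀ ψ : StrongDual ℂ ↥Y,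
      (∀ x : ↥X, ψ (inclCLM hXY x) = φ x) → ‖ψ‖ = ‖φ‖ → ψ ∈ ACset Y := by
  intro φ hφ ψ hext hnorm
  have hrestrict : ψ.comp (inclCLM hXY) = φ := ContinuousLinearMap.ext hext
  -- `LY ψ` still extends `φ`, so `‖LY ψ‖ ≥ ‖ψ‖`, and the ℓ¹ splitting of `‖ψ‖` forces `ψ - LY ψ = 0`.
  have hLYψ : (LY ψ).comp (inclCLM hXY) = φ := by
    rw [← (hcompat ψ).1, hrestrict, ← hLX.mem_ACset_iff]
    exact hφ
  have hle : ‖ψ‖ ≤ ‖LY ψ‖ := by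
    simpa only [hnorm, hLYψ] using norm_comp_inclCLM_le_s8 hXY (LY ψ)
  exact hLY.mem_ACset_iff.mpr (hLY.apply_eq_self_of_norm_le hle)
end
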